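/- arXiv:1006.4285 — 2 statements merged into one kernel-verified Lean document; each statement's English description precedes it below -/
import Mathlib

section
/- Let A, B be in SL(2,C) with A = [[s,1],[0,s^{-1}]], B = [[s,0],[-y,s^{-1}]], s nonzero. For each m >= 1, write (BA^{-1})^m = (v_m^{ij}) as polynomials in s^{\pm 1} and y. Then deg_y-weighted total degree satisfies: deg v_m^{11} = deg v_m^{21} = m-1 and deg v_m^{12} = deg v_m^{22} = m, where degree means total degree in s and y (with s^{-1} counted as degree-nonpositive appropriately); in particular tr((BA^{-1})^m) has degree m and its top-degree term does not involve s. -/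
/-!
Weight the monomial `s ^ a * y ^ b` by `a + b`. We have `B * A⁻¹ = [[1, -s], [-s⁻¹ y, y + 1]]`,
and by induction on `n` every entry of `(B * A⁻¹) ^ (n + 1)` is the single monomial
`(-1) ^ (i + j) * s ^ (j - i) * y ^ (n + i)` plus terms of smaller weight: in
`(X * M) i j = X i 0 * M 0 j + X i 1 * M 1 j` the second product outweighs the first by one, so
the leading monomials simply multiply. The degrees of the entries, and of the trace, whose top
monomial is `y ^ m`, are read off from these leading monomials.
-/

noncomputable section

/-- The ring of Laurent polynomials in `s` and ordinary polynomials in `y`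
over `ℂ`, i.e. `ℂ[s^{±1}, y]`. -/
abbrev R2 : Type := AddMonoidAlgebra ℂ (ℤ × ℕ)

/-- The variable `s`. -/
def s : R2 := AddMonoidAlgebra.single (1, 0) 1
/-- The inverse variable `s⁻¹`. -/
def sInv : R2 := AddMonoidAlgebra.single (-1, 0) 1
/-- The variable `y`. -/
def y : R2 := AddMonoidAlgebra.single (0, 1) 1

/-- `A = [[s,1],[0,s⁻¹]]`. -/
def A : Matrix (Fin 2) (Fin 2) R2 := !![s, 1; 0, sInv]
/-- `B = [[s,0],[-y,s⁻¹]]`. -/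
def B : Matrix (Fin 2) (Fin 2) R2 := !![s, 0; -y, sInv]


/-- The total degree of a Laurent polynomial in `s` and `y`: the maximum over monomials of
(exponent of `s`) + (exponent of `y`), negative powers of `s` counting negatively. -/
def deg (f : R2) : WithBot ℤ := f.coeff.support.sup fun p => ((p.1 + (p.2 : ℤ)) : WithBot ℤ)

open AddMonoidAlgebra

def wdeg (p : ℤ × ℕ) : WithBot ℤ := ((p.1 + p.2 : ℤ) : WithBot ℤ)

lemma wdeg_add (p q : ℤ × ℕ) : wdeg (p + q) = wdeg p + wdeg q := by
  simp only [wdeg, Prod.fst_add, Prod.snd_add, Nat.cast_add, ← WithBot.coe_add]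
  ring_nf

lemma wdeg_lt_wdeg {p q : ℤ × ℕ} : wdeg p < wdeg q ↔ p.1 + (p.2 : ℤ) < q.1 + q.2 :=
  WithBot.coe_lt_coe

lemma deg_eq_supDegree (f : R2) : deg f = f.supDegree wdeg := rfl

lemma deg_add_le (f g : R2) : deg (f + g) ≤ max (deg f) (deg g) := supDegree_add_le

lemma deg_mul_le (f g : R2) : deg (f * g) ≤ deg f + deg g := supDegree_mul_le wdeg_add

lemma deg_single_le (p : ℤ × ℕ) (c : ℂ) : deg (single p c) ≤ wdeg p := by
  classical
  rw [deg_eq_supDegree, supDegree_single]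
  split_ifs <;> simp

lemma coeff_eq_zero_of_deg_lt {f : R2} {p : ℤ × ℕ} (h : deg f < wdeg p) : f.coeff p = 0 :=
  coeff_eq_zero_of_not_le_supDegree h.not_ge

def HasLeadTerm (f : R2) (p : ℤ × ℕ) (c : ℂ) : Prop := deg (f - single p c) < wdeg p

namespace HasLeadTerm

variable {f g : R2} {p q : ℤ × ℕ} {c d : ℂ}

lemma of_single (p : ℤ × ℕ) (c : ℂ) : HasLeadTerm (single p c) p c := by
  simp [HasLeadTerm, deg, wdeg]

lemma deg_le (h : HasLeadTerm f p c) : deg f ≤ wdeg p := by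
  rw [← sub_add_cancel f (single p c)]
  exact (deg_add_le _ _).trans (max_le h.le (deg_single_le p c))

lemma deg_eq (h : HasLeadTerm f p c) (hc : c ≠ 0) : deg f = wdeg p := by
  rw [← sub_add_cancel f (single p c), add_comm, deg_eq_supDegree, supDegree_add_eq_left,
    supDegree_single_ne_zero p hc]
  rwa [supDegree_single_ne_zero p hc]

lemma eq_of_mem_support (h : HasLeadTerm f p c) (hq : q ∈ f.coeff.support)
    (hw : wdeg q = wdeg p) : q = p := by
  classical
  by_contra hne
  refine Finsupp.mem_support_iff.1 hq ?_
  rw [← sub_add_cancel f (single p c), coeff_add, Finsupp.add_apply,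
    coeff_eq_zero_of_deg_lt (hw ▸ h), coeff_single, Finsupp.single_apply, if_neg (Ne.symm hne),
    add_zero]

lemma add_of_deg_lt (h : HasLeadTerm f p c) (hg : deg g < wdeg p) :
    HasLeadTerm (g + f) p c := by
  rw [HasLeadTerm, add_sub_assoc]
  exact (deg_add_le _ _).trans_lt (max_lt hg h)

lemma mul (hf : HasLeadTerm f p c) (hg : HasLeadTerm g q d) :
    HasLeadTerm (f * g) (p + q) (c * d) := by
  have split : f * g - single (p + q) (c * d)
      = (f - single p c) * g + single p c * (g - single q d) := by
    rw [← single_mul_single]; ring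
  rw [HasLeadTerm, split, wdeg_add]
  refine (deg_add_le _ _).trans_lt (max_lt ?_ ?_)
  · calc deg ((f - single p c) * g) ≤ deg (f - single p c) + deg g := deg_mul_le _ _
      _ ≤ deg (f - single p c) + wdeg q := add_le_add_right hg.deg_le _
      _ < wdeg p + wdeg q := WithBot.add_lt_add_right WithBot.coe_ne_bot hf
  · calc deg (single p c * (g - single q d)) ≤ deg (single p c) + deg (g - single q d) :=
          deg_mul_le _ _
      _ ≤ wdeg p + deg (g - single q d) := add_le_add_left (deg_single_le p c) _
      _ < wdeg p + wdeg q := WithBot.add_lt_add_left WithBot.coe_ne_bot hg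

end HasLeadTerm

lemma s_mul_sInv : s * sInv = 1 := by
  simp [s, sInv, single_mul_single, one_def, Prod.mk_zero_zero]

lemma inv_A : A⁻¹ = !![sInv, -1; 0, s] := by
  refine Matrix.inv_eq_right_inv ?_
  rw [A, Matrix.mul_fin_two, s_mul_sInv, mul_comm sInv s, s_mul_sInv, Matrix.one_fin_two]
  simp

lemma B_mul_inv_A : B * A⁻¹ = !![1, -s; -(sInv * y), y + 1] := by
  rw [inv_A, B, Matrix.mul_fin_two, s_mul_sInv, mul_comm sInv s, s_mul_sInv]
  simp [mul_comm y sInv]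

def leadPos (i j : Fin 2) : ℤ × ℕ := ((j : ℤ) - i, i)

def leadCoeff (i j : Fin 2) : ℂ := (-1) ^ ((i : ℕ) + j)

lemma leadCoeff_ne_zero (i j : Fin 2) : leadCoeff i j ≠ 0 :=
  pow_ne_zero _ (neg_ne_zero.2 one_ne_zero)

lemma hasLeadTerm_B_mul_inv_A (i j : Fin 2) :
    HasLeadTerm ((B * A⁻¹) i j) (leadPos i j) (leadCoeff i j) := by
  rw [B_mul_inv_A]
  fin_cases i <;> fin_cases j
  · simpa [leadPos, leadCoeff, one_def, Prod.mk_zero_zero] using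
      HasLeadTerm.of_single (0 : ℤ × ℕ) 1
  · simpa [leadPos, leadCoeff, s, single_neg] using HasLeadTerm.of_single ((1 : ℤ), 0) (-1)
  · simpa [leadPos, leadCoeff, sInv, y, single_neg] using
      HasLeadTerm.of_single ((-1 : ℤ), 1) (-1)
  · have deg_one : deg 1 < wdeg (0, 1) := (deg_single_le 0 1).trans_lt (by simp [wdeg])
    simpa [leadPos, leadCoeff, y, add_comm] using
      (HasLeadTerm.of_single ((0 : ℤ), 1) 1).add_of_deg_lt deg_one

lemma hasLeadTerm_pow_succ (n : ℕ) (i j : Fin 2) :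
    HasLeadTerm (((B * A⁻¹) ^ (n + 1)) i j) ((0, n) + leadPos i j) (leadCoeff i j) := by
  induction n generalizing i j with
  | zero => simpa [Prod.mk_zero_zero] using hasLeadTerm_B_mul_inv_A i j
  | succ n ih =>
    have hpos : (0, n) + leadPos i 1 + leadPos 1 j = (0, n + 1) + leadPos i j := by
      simp [leadPos, Prod.ext_iff]; ring
    have hcoeff : leadCoeff i 1 * leadCoeff 1 j = leadCoeff i j := by
      simp only [leadCoeff, ← pow_add, Fin.val_one]
      rw [show (i : ℕ) + 1 + (1 + j) = i + j + 2 by ring, pow_add, neg_one_sq, mul_one]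
    have hlow : deg (((B * A⁻¹) ^ (n + 1)) i 0 * (B * A⁻¹) 0 j)
        < wdeg ((0, n + 1) + leadPos i j) :=
      ((ih i 0).mul (hasLeadTerm_B_mul_inv_A 0 j)).deg_le.trans_lt
        (wdeg_lt_wdeg.2 (by simp [leadPos]; omega))
    rw [pow_succ, Matrix.mul_apply, Fin.sum_univ_two, ← hpos, ← hcoeff]
    exact ((ih i 1).mul (hasLeadTerm_B_mul_inv_A 1 j)).add_of_deg_lt (hpos ▸ hlow)

/-- Degrees of the entries `v_m^{ij}` of `(B A⁻¹)^m`: `deg v^{11} = deg v^{21} = m - 1`,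
`deg v^{12} = deg v^{22} = m`; in particular `tr((B A⁻¹)^m)` has degree `m` and its
top-degree term does not involve `s`. -/
theorem stmt_4 (m : ℕ) (hm : 1 ≤ m) :
    deg (((B * A⁻¹) ^ m) 0 0) = ((m : ℤ) - 1 : ℤ) ∧
    deg (((B * A⁻¹) ^ m) 1 0) = ((m : ℤ) - 1 : ℤ) ∧
    deg (((B * A⁻¹) ^ m) 0 1) = (m : ℤ) ∧
    deg (((B * A⁻¹) ^ m) 1 1) = (m : ℤ) ∧
    deg (((B * A⁻¹) ^ m).trace) = (m : ℤ) ∧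
    ∀ p ∈ (((B * A⁻¹) ^ m).trace).coeff.support, p.1 + (p.2 : ℤ) = (m : ℤ) → p.1 = 0 := by
  obtain ⟨n, rfl⟩ := Nat.exists_eq_add_of_le' hm
  have lead := hasLeadTerm_pow_succ n
  have deg_entry (i j : Fin 2) :
      deg (((B * A⁻¹) ^ (n + 1)) i j) = ((n + j : ℤ) : WithBot ℤ) := by
    rw [(lead i j).deg_eq (leadCoeff_ne_zero i j)]
    simp [wdeg, leadPos, add_comm]
  have trace_lead :
      HasLeadTerm ((B * A⁻¹) ^ (n + 1)).trace ((0, n) + leadPos 1 1) (leadCoeff 1 1) := by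
    rw [Matrix.trace_fin_two]
    exact (lead 1 1).add_of_deg_lt
      ((lead 0 0).deg_le.trans_lt (wdeg_lt_wdeg.2 (by simp [leadPos])))
  refine ⟨by simp [deg_entry], by simp [deg_entry], by simp [deg_entry], by simp [deg_entry], ?_,
    fun p hp hw => ?_⟩
  · rw [trace_lead.deg_eq (leadCoeff_ne_zero 1 1)]
    simp [wdeg, leadPos]
  · have hp_lead := trace_lead.eq_of_mem_support hp (by rw [wdeg, hw]; simp [wdeg, leadPos])
    simp [hp_lead, leadPos]
end
end

section
/- Let phi(x,y) = 1 - 4x^2 + 2x^4 + (2 - x^2 - x^4) y - (1 - 2x^2) y^2 - y^3 and psi_2(x,y) = 2x^2 - x^2 y + y^2. Then the set {(x,y) in C^2 : phi(x,y) = 0 and psi_2(x,y) = 1} equals {(1/\sqrt{2}, 1/2), (-1/\sqrt{2}, 1/2)}, and the set {(x,y) in C^2 : phi(x,y) = 0 and psi_2(x,y) = 0} equals {(i/\sqrt{6}, -2/3), (-i/\sqrt{6}, -2/3)}. -/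
open Complex

/-!
Eliminating `x²` between the two equations: on `ψ₂ = c` one has the identity
`(2 - y)² φ = (2 - y) ((3 - c) y + c² - 4c + 2)`, and `y = 2` forces `ψ₂ = 4`. So for `c ≠ 3, 4`
the common zeros have a single `y`-coordinate, read off a linear equation, and then `x²` is
determined by `ψ₂ = c`.
-/

namespace Knot52

variable {K : Type*} [Field K]

def riley (x y : K) : K :=
  1 - 4 * x ^ 2 + 2 * x ^ 4 + (2 - x ^ 2 - x ^ 4) * y - (1 - 2 * x ^ 2) * y ^ 2 - y ^ 3

def alexanderLeading (x y : K) : K :=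
  2 * x ^ 2 - x ^ 2 * y + y ^ 2

theorem sq_two_sub_mul_riley {x y c : K} (h : alexanderLeading x y = c) :
    (2 - y) ^ 2 * riley x y = (2 - y) * ((3 - c) * y + c ^ 2 - 4 * c + 2) := by
  unfold riley
  unfold alexanderLeading at h
  subst h
  ring

theorem two_sub_ne_zero_of_mul_sq_eq {x y c : K} (hc : c ≠ 4) (h : (2 - y) * x ^ 2 = c - y ^ 2) :
    2 - y ≠ 0 := by
  intro hy
  obtain rfl : y = 2 := by linear_combination -hy
  exact hc (by linear_combination -h)

theorem riley_eq_zero_and_alexanderLeading_eq_iff {x y c : K} (hc : c ≠ 4) :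
    riley x y = 0 ∧ alexanderLeading x y = c ↔
      (3 - c) * y + c ^ 2 - 4 * c + 2 = 0 ∧ (2 - y) * x ^ 2 = c - y ^ 2 := by
  have lead_iff : alexanderLeading x y = c ↔ (2 - y) * x ^ 2 = c - y ^ 2 := by
    unfold alexanderLeading
    constructor <;> intro h <;> linear_combination h
  rw [lead_iff]
  refine and_congr_left fun hx ↦ ?_
  have hy := two_sub_ne_zero_of_mul_sq_eq hc hx
  have key := sq_two_sub_mul_riley (lead_iff.mpr hx)
  constructor
  · intro h
    rw [h, mul_zero, eq_comm, mul_eq_zero] at key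
    exact key.resolve_left hy
  · intro h
    rw [h, mul_zero, mul_eq_zero] at key
    exact key.resolve_left (pow_ne_zero 2 hy)

theorem setOf_riley_eq_zero_and_alexanderLeading_eq {c y₀ a : K} (hc₃ : c ≠ 3) (hc₄ : c ≠ 4)
    (hy₀ : (3 - c) * y₀ + c ^ 2 - 4 * c + 2 = 0) (ha : (2 - y₀) * a ^ 2 = c - y₀ ^ 2) :
    {p : K × K | riley p.1 p.2 = 0 ∧ alexanderLeading p.1 p.2 = c} = {(a, y₀), (-a, y₀)} := by
  ext ⟨x, y⟩
  simp only [Set.mem_ofPred_eq, Set.mem_insert_iff, Set.mem_singleton_iff, Prod.mk.injEq,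
    riley_eq_zero_and_alexanderLeading_eq_iff hc₄]
  have hc : 3 - c ≠ 0 := sub_ne_zero.mpr hc₃.symm
  have y_iff : (3 - c) * y + c ^ 2 - 4 * c + 2 = 0 ↔ y = y₀ := by
    constructor
    · intro h
      exact mul_left_cancel₀ hc (by linear_combination h - hy₀)
    · rintro rfl
      exact hy₀
  rw [y_iff, ← or_and_right, and_comm (a := y = y₀), and_congr_left_iff]
  rintro rfl
  rw [← ha, mul_right_inj' (two_sub_ne_zero_of_mul_sq_eq hc₄ ha), sq_eq_sq_iff_eq_or_eq_neg]

end Knot52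

open Knot52

/-- For the knot `5₂ = K(7,3)`, with Riley polynomial
`φ(x,y) = 1 - 4x² + 2x⁴ + (2 - x² - x⁴)y - (1 - 2x²)y² - y³` and top coefficient
`ψ₂(x,y) = 2x² - x²y + y²` of the twisted Alexander polynomial:
`{φ = 0, ψ₂ = 1} = {(±1/√2, 1/2)}` and `{φ = 0, ψ₂ = 0} = {(±i/√6, -2/3)}`. -/
theorem stmt_18 :
    ({p : ℂ × ℂ |
        1 - 4 * p.1 ^ 2 + 2 * p.1 ^ 4 + (2 - p.1 ^ 2 - p.1 ^ 4) * p.2 -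
            (1 - 2 * p.1 ^ 2) * p.2 ^ 2 - p.2 ^ 3 = 0 ∧
        2 * p.1 ^ 2 - p.1 ^ 2 * p.2 + p.2 ^ 2 = 1} =
      {((1 / (Real.sqrt 2 : ℂ)), (1 / 2 : ℂ)), (-(1 / (Real.sqrt 2 : ℂ)), (1 / 2 : ℂ))}) ∧
    ({p : ℂ × ℂ |
        1 - 4 * p.1 ^ 2 + 2 * p.1 ^ 4 + (2 - p.1 ^ 2 - p.1 ^ 4) * p.2 -
            (1 - 2 * p.1 ^ 2) * p.2 ^ 2 - p.2 ^ 3 = 0 ∧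
        2 * p.1 ^ 2 - p.1 ^ 2 * p.2 + p.2 ^ 2 = 0} =
      {((I / (Real.sqrt 6 : ℂ)), (-2 / 3 : ℂ)), (-(I / (Real.sqrt 6 : ℂ)), (-2 / 3 : ℂ))}) := by
  have sqrt_sq {r : ℝ} (hr : 0 ≤ r) : ((Real.sqrt r : ℝ) : ℂ) ^ 2 = r := by
    rw [← ofReal_pow, Real.sq_sqrt hr]
  constructor
  · apply setOf_riley_eq_zero_and_alexanderLeading_eq (by norm_num) (by norm_num) (by norm_num)
    rw [div_pow, sqrt_sq zero_le_two]
    norm_num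
  · apply setOf_riley_eq_zero_and_alexanderLeading_eq (by norm_num) (by norm_num) (by norm_num)
    rw [div_pow, I_sq, sqrt_sq (by norm_num)]
    norm_num
end
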